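/- arXiv:2307.07024 — 2 statements merged into one kernel-verified Lean document; each statement's English description precedes it below -/
import Mathlib

section
/- The Gaussian density Π with mean m and covariance A solves the stationary Fokker–Planck equation of the two-dimensional Ornstein–Uhlenbeck process: for every y ∈ ℝ², (1/2)Σ_{i,j=1}^{2} ∂²/∂yᵢ∂yⱼ (Σᵢⱼ Π(y)) − Σ_{i=1}^{2} ∂/∂yᵢ (λᵢ(mᵢ − yᵢ) Π(y)) = 0. -/
open MeasureTheory Real Filter Matrix

noncomputable section

/-- The stationary covariance matrix of the 2D OU process. -/
def matA (l₁ l₂ η₁ η₂ ρ : ℝ) : Matrix (Fin 2) (Fin 2) ℝ :=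
  !![η₁^2/(2*l₁), ρ*η₁*η₂/(l₁+l₂); ρ*η₁*η₂/(l₁+l₂), η₂^2/(2*l₂)]

/-- The Gaussian density `Π` on `ℝ²` with mean `(m₁, m₂)` and covariance `matA`. -/
def gaussPi (l₁ l₂ η₁ η₂ ρ m₁ m₂ : ℝ) (p : ℝ × ℝ) : ℝ :=
  (2*π)⁻¹ * (matA l₁ l₂ η₁ η₂ ρ).det ^ (-(1:ℝ)/2) *
    Real.exp (-(1/2) *
      (![p.1 - m₁, p.2 - m₂] ⬝ᵥ ((matA l₁ l₂ η₁ η₂ ρ)⁻¹ *ᵥ ![p.1 - m₁, p.2 - m₂])))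

/-- Partial derivative in the first coordinate. -/
def pd1 (f : ℝ × ℝ → ℝ) (p : ℝ × ℝ) : ℝ := fderiv ℝ f p (1, 0)

/-- Partial derivative in the second coordinate. -/
def pd2 (f : ℝ × ℝ → ℝ) (p : ℝ × ℝ) : ℝ := fderiv ℝ f p (0, 1)

/-- The generator `L` of the two-dimensional OU process. -/
def gen (l₁ l₂ η₁ η₂ ρ m₁ m₂ : ℝ) (g : ℝ × ℝ → ℝ) (p : ℝ × ℝ) : ℝ :=
  (1/2) * η₁^2 * pd1 (pd1 g) p + ρ*η₁*η₂ * pd2 (pd1 g) p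
    + (1/2) * η₂^2 * pd2 (pd2 g) p
    + l₁ * (m₁ - p.1) * pd1 g p + l₂ * (m₂ - p.2) * pd2 g p

/-- A function on `ℝ²` is at most polynomially growing. -/
def PolyGrowth (h : ℝ × ℝ → ℝ) : Prop :=
  ∃ C : ℝ, 0 < C ∧ ∃ n : ℕ, 0 < n ∧ ∀ p : ℝ × ℝ, |h p| ≤ C * (1 + ‖p‖ ^ n)

/-- `g` is `C²` and `g` together with all its partial derivatives up to order 2
are at most polynomially growing. -/
def NicelyC2 (g : ℝ × ℝ → ℝ) : Prop :=
  ContDiff ℝ 2 g ∧ PolyGrowth g ∧ PolyGrowth (pd1 g) ∧ PolyGrowth (pd2 g) ∧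
    PolyGrowth (pd1 (pd1 g)) ∧ PolyGrowth (pd2 (pd1 g)) ∧
    PolyGrowth (pd1 (pd2 g)) ∧ PolyGrowth (pd2 (pd2 g))

/-- The largest eigenvalue of the symmetric 2×2 matrix `matA`. -/
def lamMax (l₁ l₂ η₁ η₂ ρ : ℝ) : ℝ :=
  ((matA l₁ l₂ η₁ η₂ ρ).trace
    + Real.sqrt ((matA l₁ l₂ η₁ η₂ ρ).trace^2 - 4 * (matA l₁ l₂ η₁ η₂ ρ).det)) / 2

/-!
For `f = K exp(-½ (y - m)ᵀ A⁻¹ (y - m))` one has `∂ᵢ f = -(A⁻¹(y - m))ᵢ f` and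
`∂ᵢ∂ⱼ f = ((A⁻¹(y - m))ᵢ (A⁻¹(y - m))ⱼ - (A⁻¹)ᵢⱼ) f`, so the Fokker–Planck operator maps `f` to
`f` times a quadratic polynomial in `y - m`. The covariance `A` solves the Lyapunov equation
`ΛA + AΛ = Σ`; hence `A⁻¹ΣA⁻¹ = A⁻¹Λ + ΛA⁻¹` kills the quadratic part and `tr(ΣA⁻¹) = 2 tr Λ`
kills the constant part. The constraints on the parameters give `det A > 0`, so `A⁻¹` is the
genuine inverse.
-/

lemma pd1_eq_deriv {f : ℝ × ℝ → ℝ} {p : ℝ × ℝ} (hf : DifferentiableAt ℝ f p) :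
    pd1 f p = deriv (fun x => f (x, p.2)) p.1 :=
  ((hf.hasFDerivAt.comp_hasDerivAt p.1
    ((hasDerivAt_id p.1).prodMk (hasDerivAt_const p.1 p.2))).deriv).symm

lemma pd2_eq_deriv {f : ℝ × ℝ → ℝ} {p : ℝ × ℝ} (hf : DifferentiableAt ℝ f p) :
    pd2 f p = deriv (fun y => f (p.1, y)) p.2 :=
  ((hf.hasFDerivAt.comp_hasDerivAt p.2
    ((hasDerivAt_const p.2 p.1).prodMk (hasDerivAt_id p.2))).deriv).symm

def quadExp (A B C m₁ m₂ : ℝ) (q : ℝ × ℝ) : ℝ :=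
  exp (A * (q.1 - m₁) ^ 2 + B * (q.1 - m₁) * (q.2 - m₂) + C * (q.2 - m₂) ^ 2)

section
variable (A B C m₁ m₂ a b c : ℝ) (p : ℝ × ℝ)

lemma differentiable_affine_mul_quadExp :
    Differentiable ℝ fun q : ℝ × ℝ =>
      (a + b * (q.1 - m₁) + c * (q.2 - m₂)) * quadExp A B C m₁ m₂ q := by
  unfold quadExp; fun_prop

lemma pd1_affine_mul_quadExp :
    pd1 (fun q => (a + b * (q.1 - m₁) + c * (q.2 - m₂)) * quadExp A B C m₁ m₂ q) p
      = (b + (a + b * (p.1 - m₁) + c * (p.2 - m₂)) * (2 * A * (p.1 - m₁) + B * (p.2 - m₂)))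
          * quadExp A B C m₁ m₂ p := by
  rw [pd1_eq_deriv (differentiable_affine_mul_quadExp A B C m₁ m₂ a b c p)]
  have hu : HasDerivAt (fun x : ℝ => x - m₁) 1 p.1 := (hasDerivAt_id p.1).sub_const m₁
  have h := (((hu.const_mul b).const_add a).add_const (c * (p.2 - m₂))).mul
    ((((hu.pow 2).const_mul A).add ((hu.const_mul B).mul_const (p.2 - m₂))).add_const
      (C * (p.2 - m₂) ^ 2)).exp
  unfold quadExp
  refine h.deriv.trans ?_
  simp only [Pi.add_apply, Pi.pow_apply, Nat.cast_ofNat]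
  ring

lemma pd2_affine_mul_quadExp :
    pd2 (fun q => (a + b * (q.1 - m₁) + c * (q.2 - m₂)) * quadExp A B C m₁ m₂ q) p
      = (c + (a + b * (p.1 - m₁) + c * (p.2 - m₂)) * (B * (p.1 - m₁) + 2 * C * (p.2 - m₂)))
          * quadExp A B C m₁ m₂ p := by
  rw [pd2_eq_deriv (differentiable_affine_mul_quadExp A B C m₁ m₂ a b c p)]
  have hv : HasDerivAt (fun y : ℝ => y - m₂) 1 p.2 := (hasDerivAt_id p.2).sub_const m₂
  have h := ((hv.const_mul c).const_add (a + b * (p.1 - m₁))).mul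
    ((((hv.const_mul (B * (p.1 - m₁))).const_add (A * (p.1 - m₁) ^ 2)).add
      ((hv.pow 2).const_mul C))).exp
  unfold quadExp
  refine h.deriv.trans ?_
  simp only [Pi.add_apply, Pi.pow_apply, Nat.cast_ofNat]
  ring

end

def fokkerPlanckOp (s₁₁ s₁₂ s₂₂ l₁ l₂ m₁ m₂ : ℝ) (f : ℝ × ℝ → ℝ) (p : ℝ × ℝ) : ℝ :=
  (1/2) * (pd1 (pd1 (fun q => s₁₁ * f q)) p
      + pd1 (pd2 (fun q => s₁₂ * f q)) p
      + pd2 (pd1 (fun q => s₁₂ * f q)) p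
      + pd2 (pd2 (fun q => s₂₂ * f q)) p)
    - pd1 (fun q => l₁ * (m₁ - q.1) * f q) p
    - pd2 (fun q => l₂ * (m₂ - q.2) * f q) p

lemma fokkerPlanckOp_const_mul_quadExp (s₁₁ s₁₂ s₂₂ l₁ l₂ m₁ m₂ A B C K : ℝ) (p : ℝ × ℝ) :
    fokkerPlanckOp s₁₁ s₁₂ s₂₂ l₁ l₂ m₁ m₂ (fun q => K * quadExp A B C m₁ m₂ q) p
      = K * quadExp A B C m₁ m₂ p *
        ((1/2) * (s₁₁ * (2 * A + (2 * A * (p.1 - m₁) + B * (p.2 - m₂)) ^ 2)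
            + 2 * s₁₂ * (B + (2 * A * (p.1 - m₁) + B * (p.2 - m₂))
                * (B * (p.1 - m₁) + 2 * C * (p.2 - m₂)))
            + s₂₂ * (2 * C + (B * (p.1 - m₁) + 2 * C * (p.2 - m₂)) ^ 2))
          + l₁ + l₂ + l₁ * (p.1 - m₁) * (2 * A * (p.1 - m₁) + B * (p.2 - m₂))
          + l₂ * (p.2 - m₂) * (B * (p.1 - m₁) + 2 * C * (p.2 - m₂))) := by
  set E := quadExp A B C m₁ m₂
  have hdiff (s : ℝ) : (fun q => s * (K * E q))
      = fun q => (s * K + 0 * (q.1 - m₁) + 0 * (q.2 - m₂)) * E q := by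
    funext q; ring
  have hdrift₁ : (fun q => l₁ * (m₁ - q.1) * (K * E q))
      = fun q => (0 + -(l₁ * K) * (q.1 - m₁) + 0 * (q.2 - m₂)) * E q := by
    funext q; ring
  have hdrift₂ : (fun q => l₂ * (m₂ - q.2) * (K * E q))
      = fun q => (0 + 0 * (q.1 - m₁) + -(l₂ * K) * (q.2 - m₂)) * E q := by
    funext q; ring
  have hgrad₁ (a : ℝ) : pd1 (fun q => (a + 0 * (q.1 - m₁) + 0 * (q.2 - m₂)) * E q)
      = fun q => (0 + 2 * A * a * (q.1 - m₁) + B * a * (q.2 - m₂)) * E q :=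
    funext fun q => (pd1_affine_mul_quadExp ..).trans (by ring)
  have hgrad₂ (a : ℝ) : pd2 (fun q => (a + 0 * (q.1 - m₁) + 0 * (q.2 - m₂)) * E q)
      = fun q => (0 + B * a * (q.1 - m₁) + 2 * C * a * (q.2 - m₂)) * E q :=
    funext fun q => (pd2_affine_mul_quadExp ..).trans (by ring)
  rw [fokkerPlanckOp, hdiff, hdiff, hdiff, hdrift₁, hdrift₂, hgrad₁, hgrad₂, hgrad₁, hgrad₂]
  simp only [pd1_affine_mul_quadExp, pd2_affine_mul_quadExp, E]
  ring

lemma neg_half_inv_quadForm_fin_two (a b c x y : ℝ) :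
    -(1/2) * (![x, y] ⬝ᵥ (!![a, b; b, c]⁻¹ *ᵥ ![x, y]))
      = -(c * x ^ 2 - 2 * b * x * y + a * y ^ 2) / (2 * (a * c - b ^ 2)) := by
  rw [inv_def, det_fin_two_of, adjugate_fin_two_of, Ring.inverse_eq_inv']
  simp only [dotProduct, mulVec, Fin.sum_univ_two, Matrix.smul_apply, of_apply, cons_val',
    cons_val_zero, cons_val_one, cons_val_fin_one, smul_eq_mul]
  field_simp
  ring

/-- `h₁₁`, `h₁₂`, `h₂₂` say that the covariance `!![a, b; b, c]` solves the Lyapunov equation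
`ΛA + AΛ = Σ` with `Λ = diag(l₁, l₂)` and `Σ = !![s₁₁, s₁₂; s₁₂, s₂₂]`. -/
theorem fokkerPlanckOp_gaussian_eq_zero {a b c s₁₁ s₁₂ s₂₂ l₁ l₂ : ℝ} (m₁ m₂ K : ℝ)
    (hdet : (!![a, b; b, c]).det ≠ 0)
    (h₁₁ : s₁₁ = 2 * l₁ * a) (h₁₂ : s₁₂ = (l₁ + l₂) * b) (h₂₂ : s₂₂ = 2 * l₂ * c)
    (p : ℝ × ℝ) :
    fokkerPlanckOp s₁₁ s₁₂ s₂₂ l₁ l₂ m₁ m₂ (fun q => K * exp (-(1/2) *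
      (![q.1 - m₁, q.2 - m₂] ⬝ᵥ (!![a, b; b, c]⁻¹ *ᵥ ![q.1 - m₁, q.2 - m₂])))) p = 0 := by
  have hd : a * c - b ^ 2 ≠ 0 := by rwa [det_fin_two_of, ← sq] at hdet
  have hf : (fun q : ℝ × ℝ => K * exp (-(1/2) *
      (![q.1 - m₁, q.2 - m₂] ⬝ᵥ (!![a, b; b, c]⁻¹ *ᵥ ![q.1 - m₁, q.2 - m₂]))))
      = fun q => K * quadExp (-c / (2 * (a * c - b ^ 2))) (b / (a * c - b ^ 2))
          (-a / (2 * (a * c - b ^ 2))) m₁ m₂ q := by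
    funext q
    rw [neg_half_inv_quadForm_fin_two, quadExp]
    congr 2
    field_simp
    ring
  rw [hf, fokkerPlanckOp_const_mul_quadExp, h₁₁, h₁₂, h₂₂]
  apply mul_eq_zero_of_right
  field_simp
  ring

lemma matA_det_pos {l₁ l₂ η₁ η₂ ρ : ℝ} (hl₁ : 0 < l₁) (hl₂ : 0 < l₂) (hη₁ : 0 < η₁)
    (hη₂ : 0 < η₂) (hρ : ρ ∈ Set.Ioo (-1 : ℝ) 1) : 0 < (matA l₁ l₂ η₁ η₂ ρ).det := by
  have hρ2 : ρ ^ 2 < 1 := by rw [sq_lt_one_iff_abs_lt_one, abs_lt]; exact hρ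
  have hAMGM : 4 * (l₁ * l₂) ≤ (l₁ + l₂) ^ 2 := by nlinarith [sq_nonneg (l₁ - l₂)]
  have hρl : (ρ / (l₁ + l₂)) ^ 2 < 1 / (4 * (l₁ * l₂)) :=
    calc (ρ / (l₁ + l₂)) ^ 2 = ρ ^ 2 / (l₁ + l₂) ^ 2 := div_pow ..
      _ < 1 / (l₁ + l₂) ^ 2 := by gcongr
      _ ≤ 1 / (4 * (l₁ * l₂)) := by gcongr
  have hdet : (matA l₁ l₂ η₁ η₂ ρ).det
      = (η₁ * η₂) ^ 2 * (1 / (4 * (l₁ * l₂)) - (ρ / (l₁ + l₂)) ^ 2) := by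
    rw [matA, det_fin_two_of]; ring
  have hgap := sub_pos.mpr hρl
  rw [hdet]
  positivity

/-- The Gaussian density `Π` with mean `m` and covariance `matA`
solves the stationary Fokker–Planck equation of the 2D OU process:
`(1/2) Σ_{i,j} ∂²(Σᵢⱼ Π)/∂yᵢ∂yⱼ − Σ_i ∂(λᵢ(mᵢ−yᵢ)Π)/∂yᵢ = 0`. -/
theorem gaussPi_solves_stationary_fokker_planck
    (l₁ l₂ η₁ η₂ ρ m₁ m₂ : ℝ)
    (hl₁ : 0 < l₁) (hl₂ : 0 < l₂) (hη₁ : 0 < η₁) (hη₂ : 0 < η₂)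
    (hρ : ρ ∈ Set.Ioo (-1 : ℝ) 1) :
    ∀ p : ℝ × ℝ,
      (1/2) * (pd1 (pd1 (fun q => η₁^2 * gaussPi l₁ l₂ η₁ η₂ ρ m₁ m₂ q)) p
          + pd1 (pd2 (fun q => ρ*η₁*η₂ * gaussPi l₁ l₂ η₁ η₂ ρ m₁ m₂ q)) p
          + pd2 (pd1 (fun q => ρ*η₁*η₂ * gaussPi l₁ l₂ η₁ η₂ ρ m₁ m₂ q)) p
          + pd2 (pd2 (fun q => η₂^2 * gaussPi l₁ l₂ η₁ η₂ ρ m₁ m₂ q)) p)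
        - pd1 (fun q => l₁ * (m₁ - q.1) * gaussPi l₁ l₂ η₁ η₂ ρ m₁ m₂ q) p
        - pd2 (fun q => l₂ * (m₂ - q.2) * gaussPi l₁ l₂ η₁ η₂ ρ m₁ m₂ q) p = 0 :=
  fokkerPlanckOp_gaussian_eq_zero m₁ m₂ _ (matA_det_pos hl₁ hl₂ hη₁ hη₂ hρ).ne'
    (by field_simp) (by field_simp) (by field_simp)

end
end

section
/- (Energy/coercivity estimate for the OU generator.) Assume 0 ≤ ρ < 1. For every e ∈ C²(ℝ²) such that e and all its partial derivatives up to order 2 are at most polynomially growing, −∫_{ℝ²} e(y) (Le)(y) Π(y) dy ≥ (1/2) min(η₁², η₂²)(1−ρ) ∫_{ℝ²} |∇e(y)|² Π(y) dy. -/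
/-!
Since `Π` is invariant for `L`, `∫ L(e²) Π = 0`, and the carré du champ identity
`L(e²) = 2 e Le + ∇eᵀ Σ ∇e`, with `Σ = [[η₁², ρη₁η₂], [ρη₁η₂, η₂²]]`, turns this into
`-∫ e Le Π = ½ ∫ ∇eᵀ Σ ∇e Π`; for `0 ≤ ρ ≤ 1` one has `Σ ≥ min(η₁², η₂²)(1 - ρ) I`.

Invariance is an integration by parts. Since `A` solves the Lyapunov equation `BA + AB = Σ`,
`B = diag(λ₁, λ₂)`, the drift `-B(y - m)` equals `½ Σ ∇log Π + κ J ∇log Π`, where `J` is the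
rotation by a right angle and `κ = (λ₁ - λ₂) A₁₂ / 2`. The rotated score field is divergence-free
for `Π`, so `(Lf) Π` is the divergence of `(½ Σ ∇f + κ f J ∇log Π) Π`. Polynomial growth of all
integrands makes every integral against the Gaussian converge.
-/

open MeasureTheory Real Filter Matrix

noncomputable section

attribute [fun_prop] PolyGrowth

section PartialDerivatives

variable {f g : ℝ × ℝ → ℝ}

@[fun_prop]
theorem measurable_pd1 (f : ℝ × ℝ → ℝ) : Measurable (pd1 f) :=
  measurable_fderiv_apply_const ℝ f _

@[fun_prop]
theorem measurable_pd2 (f : ℝ × ℝ → ℝ) : Measurable (pd2 f) :=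
  measurable_fderiv_apply_const ℝ f _

theorem ContDiff.differentiable_pd1 (hf : ContDiff ℝ 2 f) : Differentiable ℝ (pd1 f) :=
  ((hf.fderiv_right (m := 1) le_rfl).clm_apply contDiff_const).differentiable one_ne_zero

theorem ContDiff.differentiable_pd2 (hf : ContDiff ℝ 2 f) : Differentiable ℝ (pd2 f) :=
  ((hf.fderiv_right (m := 1) le_rfl).clm_apply contDiff_const).differentiable one_ne_zero

theorem pd1_pd2_comm (hf : ContDiff ℝ 2 f) : pd1 (pd2 f) = pd2 (pd1 f) := by
  ext p
  have hd := (hf.fderiv_right (m := 1) le_rfl).differentiable one_ne_zero p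
  change fderiv ℝ (fun q => fderiv ℝ f q (0, 1)) p (1, 0) =
    fderiv ℝ (fun q => fderiv ℝ f q (1, 0)) p (0, 1)
  rw [fderiv_clm_apply hd (differentiableAt_const _),
    fderiv_clm_apply hd (differentiableAt_const _)]
  simpa using hf.contDiffAt.isSymmSndFDerivAt (by simp) (1, 0) (0, 1)

theorem pd1_add (hf : Differentiable ℝ f) (hg : Differentiable ℝ g) :
    pd1 (fun p => f p + g p) = fun p => pd1 f p + pd1 g p := by
  ext p; simp [pd1, fderiv_fun_add (hf p) (hg p)]

theorem pd2_add (hf : Differentiable ℝ f) (hg : Differentiable ℝ g) :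
    pd2 (fun p => f p + g p) = fun p => pd2 f p + pd2 g p := by
  ext p; simp [pd2, fderiv_fun_add (hf p) (hg p)]

theorem pd2_sub (hf : Differentiable ℝ f) (hg : Differentiable ℝ g) :
    pd2 (fun p => f p - g p) = fun p => pd2 f p - pd2 g p := by
  ext p; simp [pd2, fderiv_fun_sub (hf p) (hg p)]

theorem pd1_mul (hf : Differentiable ℝ f) (hg : Differentiable ℝ g) :
    pd1 (fun p => f p * g p) = fun p => pd1 f p * g p + f p * pd1 g p := by
  ext p
  simp only [pd1, fderiv_fun_mul (hf p) (hg p), _root_.add_apply,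
    _root_.smul_apply, smul_eq_mul]
  ring

theorem pd2_mul (hf : Differentiable ℝ f) (hg : Differentiable ℝ g) :
    pd2 (fun p => f p * g p) = fun p => pd2 f p * g p + f p * pd2 g p := by
  ext p
  simp only [pd2, fderiv_fun_mul (hf p) (hg p), _root_.add_apply,
    _root_.smul_apply, smul_eq_mul]
  ring

theorem pd1_const_mul (hf : Differentiable ℝ f) (c : ℝ) :
    pd1 (fun p => c * f p) = fun p => c * pd1 f p := by
  ext p; simp [pd1, fderiv_const_mul (hf p)]

theorem pd2_const_mul (hf : Differentiable ℝ f) (c : ℝ) :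
    pd2 (fun p => c * f p) = fun p => c * pd2 f p := by
  ext p; simp [pd2, fderiv_const_mul (hf p)]

end PartialDerivatives

namespace PolyGrowth

variable {f g : ℝ × ℝ → ℝ}

theorem of_le {C : ℝ} {n : ℕ} (h : ∀ p, |f p| ≤ C * (1 + ‖p‖) ^ n) : PolyGrowth f := by
  refine ⟨2 ^ n * (|C| + 1), by positivity, n + 1, n.succ_pos, fun p => ?_⟩
  have h1 : (1 : ℝ) ≤ 1 + ‖p‖ := le_add_of_nonneg_right (norm_nonneg p)
  calc |f p| ≤ (|C| + 1) * (1 + ‖p‖) ^ (n + 1) := by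
        refine (h p).trans (mul_le_mul (by linarith [le_abs_self C]) ?_ (by positivity)
          (by positivity))
        exact pow_le_pow_right₀ h1 n.le_succ
    _ ≤ (|C| + 1) * (2 ^ n * (1 ^ (n + 1) + ‖p‖ ^ (n + 1))) := by
        gcongr; exact add_pow_le zero_le_one (norm_nonneg p) (n + 1)
    _ = 2 ^ n * (|C| + 1) * (1 + ‖p‖ ^ (n + 1)) := by ring

theorem exists_le (hf : PolyGrowth f) :
    ∃ C, 0 < C ∧ ∃ n : ℕ, ∀ p, |f p| ≤ C * (1 + ‖p‖) ^ n := by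
  obtain ⟨C, hC, n, hn, h⟩ := hf
  refine ⟨C, hC, n, fun p => (h p).trans (mul_le_mul_of_nonneg_left ?_ hC.le)⟩
  simpa using pow_add_pow_le zero_le_one (norm_nonneg p) hn.ne'

@[fun_prop]
theorem add (hf : PolyGrowth f) (hg : PolyGrowth g) : PolyGrowth fun p => f p + g p := by
  obtain ⟨C₁, hC₁, n₁, h₁⟩ := hf.exists_le
  obtain ⟨C₂, hC₂, n₂, h₂⟩ := hg.exists_le
  refine of_le (C := C₁ + C₂) (n := n₁ + n₂) fun p => ?_
  have h1 : (1 : ℝ) ≤ 1 + ‖p‖ := le_add_of_nonneg_right (norm_nonneg p)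
  have e₁ : (1 + ‖p‖) ^ n₁ ≤ (1 + ‖p‖) ^ (n₁ + n₂) := pow_le_pow_right₀ h1 (by omega)
  have e₂ : (1 + ‖p‖) ^ n₂ ≤ (1 + ‖p‖) ^ (n₁ + n₂) := pow_le_pow_right₀ h1 (by omega)
  calc |f p + g p| ≤ C₁ * (1 + ‖p‖) ^ n₁ + C₂ * (1 + ‖p‖) ^ n₂ :=
        (abs_add_le _ _).trans (add_le_add (h₁ p) (h₂ p))
    _ ≤ (C₁ + C₂) * (1 + ‖p‖) ^ (n₁ + n₂) := by nlinarith

@[fun_prop]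
theorem mul (hf : PolyGrowth f) (hg : PolyGrowth g) : PolyGrowth fun p => f p * g p := by
  obtain ⟨C₁, hC₁, n₁, h₁⟩ := hf.exists_le
  obtain ⟨C₂, hC₂, n₂, h₂⟩ := hg.exists_le
  refine of_le (C := C₁ * C₂) (n := n₁ + n₂) fun p => ?_
  rw [abs_mul, pow_add, mul_mul_mul_comm]
  exact mul_le_mul (h₁ p) (h₂ p) (abs_nonneg _) (by positivity)

@[fun_prop]
theorem neg (hf : PolyGrowth f) : PolyGrowth fun p => -f p := by
  simpa only [PolyGrowth, abs_neg] using hf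

@[fun_prop]
theorem sub (hf : PolyGrowth f) (hg : PolyGrowth g) : PolyGrowth fun p => f p - g p := by
  simpa only [sub_eq_add_neg] using hf.add hg.neg

end PolyGrowth

@[fun_prop]
theorem polyGrowth_const (c : ℝ) : PolyGrowth fun _ => c :=
  PolyGrowth.of_le (C := |c|) (n := 0) fun _ => by simp

@[fun_prop]
theorem PolyGrowth.pow {f : ℝ × ℝ → ℝ} (hf : PolyGrowth f) (n : ℕ) :
    PolyGrowth fun p => f p ^ n := by
  induction n with
  | zero => simpa using polyGrowth_const 1
  | succ n ih => simpa only [pow_succ] using ih.mul hf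

@[fun_prop]
theorem polyGrowth_fst : PolyGrowth Prod.fst :=
  PolyGrowth.of_le (C := 1) (n := 1) fun p => by
    simpa using (norm_fst_le p).trans (le_add_of_nonneg_left zero_le_one)

@[fun_prop]
theorem polyGrowth_snd : PolyGrowth Prod.snd :=
  PolyGrowth.of_le (C := 1) (n := 1) fun p => by
    simpa using (norm_snd_le p).trans (le_add_of_nonneg_left zero_le_one)

theorem integrable_one_add_abs_pow_mul_exp_neg_mul_sq {β : ℝ} (hβ : 0 < β) (n : ℕ) :
    Integrable fun x : ℝ => (1 + |x|) ^ n * exp (-β * x ^ 2) := by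
  have hpow : Integrable fun x : ℝ => x ^ n * exp (-β * x ^ 2) := by
    simpa using integrable_rpow_mul_exp_neg_mul_sq hβ (s := n)
      (by linarith [n.cast_nonneg (α := ℝ)])
  refine (((integrable_exp_neg_mul_sq hβ).add hpow.abs).const_mul (2 ^ (n - 1))).mono'
    (by fun_prop) (Eventually.of_forall fun x => ?_)
  rw [norm_of_nonneg (by positivity), Pi.add_apply, abs_mul, abs_pow, abs_of_pos (exp_pos _)]
  calc (1 + |x|) ^ n * exp (-β * x ^ 2)
      ≤ 2 ^ (n - 1) * (1 ^ n + |x| ^ n) * exp (-β * x ^ 2) := by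
        gcongr; exact add_pow_le zero_le_one (abs_nonneg x) n
    _ = _ := by ring

theorem one_add_norm_le_mul (p : ℝ × ℝ) (m₁ m₂ : ℝ) :
    1 + ‖p‖ ≤ (1 + (|m₁| + |m₂|)) * ((1 + |p.1 - m₁|) * (1 + |p.2 - m₂|)) := by
  have h₁ : |p.1| ≤ |p.1 - m₁| + |m₁| := by simpa using abs_add_le (p.1 - m₁) m₁
  have h₂ : |p.2| ≤ |p.2 - m₂| + |m₂| := by simpa using abs_add_le (p.2 - m₂) m₂
  have hp : ‖p‖ ≤ (|m₁| + |m₂|) + |p.1 - m₁| + |p.2 - m₂| := by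
    refine norm_prod_le_iff.2 ⟨?_, ?_⟩ <;> rw [Real.norm_eq_abs] <;>
      linarith [abs_nonneg m₁, abs_nonneg m₂, abs_nonneg (p.1 - m₁), abs_nonneg (p.2 - m₂)]
  have hR : 0 ≤ |m₁| + |m₂| := by positivity
  have hu := abs_nonneg (p.1 - m₁)
  have hv := abs_nonneg (p.2 - m₂)
  nlinarith [mul_nonneg hR hu, mul_nonneg hR hv, mul_nonneg hu hv,
    mul_nonneg (mul_nonneg hR hu) hv]

/-- The density of `𝒩((m₁, m₂), [[a, c], [c, b]])`. -/
def gaussDensity (a b c m₁ m₂ : ℝ) (p : ℝ × ℝ) : ℝ :=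
  (2 * π)⁻¹ * (a * b - c ^ 2) ^ (-(1 : ℝ) / 2) *
    exp (-(1 / 2) *
      ((b * (p.1 - m₁) ^ 2 - 2 * c * (p.1 - m₁) * (p.2 - m₂) + a * (p.2 - m₂) ^ 2) /
        (a * b - c ^ 2)))

/- `(gaussScore₁, gaussScore₂) = ∇ log gaussDensity = -A⁻¹ (p - m)`, `A = [[a, c], [c, b]]`. -/

def gaussScore₁ (a b c m₁ m₂ : ℝ) (p : ℝ × ℝ) : ℝ :=
  (c * (p.2 - m₂) - b * (p.1 - m₁)) / (a * b - c ^ 2)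

def gaussScore₂ (a b c m₁ m₂ : ℝ) (p : ℝ × ℝ) : ℝ :=
  (c * (p.1 - m₁) - a * (p.2 - m₂)) / (a * b - c ^ 2)

theorem gaussPi_eq_gaussDensity (l₁ l₂ η₁ η₂ ρ m₁ m₂ : ℝ) :
    gaussPi l₁ l₂ η₁ η₂ ρ m₁ m₂ =
      gaussDensity (η₁ ^ 2 / (2 * l₁)) (η₂ ^ 2 / (2 * l₂)) (ρ * η₁ * η₂ / (l₁ + l₂)) m₁ m₂ := by
  ext p
  have hdet : (matA l₁ l₂ η₁ η₂ ρ).det =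
      η₁ ^ 2 / (2 * l₁) * (η₂ ^ 2 / (2 * l₂)) - (ρ * η₁ * η₂ / (l₁ + l₂)) ^ 2 := by
    rw [matA, det_fin_two_of]; ring
  rw [gaussPi, gaussDensity, inv_def, hdet, Ring.inverse_eq_inv', matA, adjugate_fin_two_of]
  simp only [mulVec, dotProduct, Fin.sum_univ_two, Matrix.smul_apply, of_apply, cons_val',
    cons_val_zero, cons_val_one, cons_val_fin_one, smul_eq_mul]
  congr 2
  ring

section GaussianDensity

variable {a b c m₁ m₂ : ℝ}

theorem gaussDensity_nonneg (hd : 0 < a * b - c ^ 2) (p : ℝ × ℝ) :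
    0 ≤ gaussDensity a b c m₁ m₂ p := by
  unfold gaussDensity; positivity

theorem gaussDensity_le (ha : 0 < a) (hb : 0 < b) (hd : 0 < a * b - c ^ 2) (p : ℝ × ℝ) :
    gaussDensity a b c m₁ m₂ p ≤ (2 * π)⁻¹ * (a * b - c ^ 2) ^ (-(1 : ℝ) / 2) *
      (exp (-(1 / (4 * a)) * (p.1 - m₁) ^ 2) * exp (-(1 / (4 * b)) * (p.2 - m₂) ^ 2)) := by
  unfold gaussDensity
  gcongr
  set z₁ := p.1 - m₁
  set z₂ := p.2 - m₂
  -- Schur complements: `zᵀ A⁻¹ z ≥ z₁² / a` and `zᵀ A⁻¹ z ≥ z₂² / b`.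
  have h₁ : z₁ ^ 2 / a ≤ (b * z₁ ^ 2 - 2 * c * z₁ * z₂ + a * z₂ ^ 2) / (a * b - c ^ 2) := by
    rw [div_le_div_iff₀ ha hd]; nlinarith [sq_nonneg (c * z₁ - a * z₂)]
  have h₂ : z₂ ^ 2 / b ≤ (b * z₁ ^ 2 - 2 * c * z₁ * z₂ + a * z₂ ^ 2) / (a * b - c ^ 2) := by
    rw [div_le_div_iff₀ hb hd]; nlinarith [sq_nonneg (c * z₂ - b * z₁)]
  rw [← exp_add, exp_le_exp]
  linarith [show 1 / (4 * a) * z₁ ^ 2 = z₁ ^ 2 / a / 4 by ring,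
    show 1 / (4 * b) * z₂ ^ 2 = z₂ ^ 2 / b / 4 by ring]

@[fun_prop]
theorem differentiable_gaussDensity : Differentiable ℝ (gaussDensity a b c m₁ m₂) := by
  unfold gaussDensity; fun_prop

theorem PolyGrowth.integrable_mul_gaussDensity {f : ℝ × ℝ → ℝ} (ha : 0 < a) (hb : 0 < b)
    (hd : 0 < a * b - c ^ 2) (hm : Measurable f) (hf : PolyGrowth f) :
    Integrable fun p => f p * gaussDensity a b c m₁ m₂ p := by
  obtain ⟨C, hC, n, hfC⟩ := hf.exists_le
  set Z := (2 * π)⁻¹ * (a * b - c ^ 2) ^ (-(1 : ℝ) / 2)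
  set R := |m₁| + |m₂|
  set φ₁ := fun x : ℝ => (1 + |x - m₁|) ^ n * exp (-(1 / (4 * a)) * (x - m₁) ^ 2)
  set φ₂ := fun y : ℝ => (1 + |y - m₂|) ^ n * exp (-(1 / (4 * b)) * (y - m₂) ^ 2)
  have hφ : Integrable fun p : ℝ × ℝ => φ₁ p.1 * φ₂ p.2 :=
    ((integrable_one_add_abs_pow_mul_exp_neg_mul_sq (by positivity) n).comp_sub_right m₁).mul_prod
      ((integrable_one_add_abs_pow_mul_exp_neg_mul_sq (by positivity) n).comp_sub_right m₂)
  refine (hφ.const_mul (C * (1 + R) ^ n * Z)).mono'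
    (hm.aestronglyMeasurable.mul differentiable_gaussDensity.continuous.aestronglyMeasurable)
    (Eventually.of_forall fun p => ?_)
  rw [norm_mul, Real.norm_eq_abs, norm_of_nonneg (gaussDensity_nonneg hd p)]
  calc |f p| * gaussDensity a b c m₁ m₂ p
      ≤ C * ((1 + R) * ((1 + |p.1 - m₁|) * (1 + |p.2 - m₂|))) ^ n *
          (Z * (exp (-(1 / (4 * a)) * (p.1 - m₁) ^ 2) *
            exp (-(1 / (4 * b)) * (p.2 - m₂) ^ 2))) := by
        refine mul_le_mul ((hfC p).trans ?_) (gaussDensity_le ha hb hd p)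
          (gaussDensity_nonneg hd p) (by positivity)
        gcongr
        exact one_add_norm_le_mul p m₁ m₂
    _ = C * (1 + R) ^ n * Z * (φ₁ p.1 * φ₂ p.2) := by rw [mul_pow, mul_pow]; ring

@[fun_prop]
theorem differentiable_gaussScore₁ : Differentiable ℝ (gaussScore₁ a b c m₁ m₂) := by
  unfold gaussScore₁; fun_prop

@[fun_prop]
theorem differentiable_gaussScore₂ : Differentiable ℝ (gaussScore₂ a b c m₁ m₂) := by
  unfold gaussScore₂; fun_prop

@[fun_prop]
theorem measurable_gaussScore₁ : Measurable (gaussScore₁ a b c m₁ m₂) :=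
  differentiable_gaussScore₁.continuous.measurable

@[fun_prop]
theorem measurable_gaussScore₂ : Measurable (gaussScore₂ a b c m₁ m₂) :=
  differentiable_gaussScore₂.continuous.measurable

@[fun_prop]
theorem polyGrowth_gaussScore₁ : PolyGrowth (gaussScore₁ a b c m₁ m₂) := by
  unfold gaussScore₁; simp only [div_eq_mul_inv]; fun_prop

@[fun_prop]
theorem polyGrowth_gaussScore₂ : PolyGrowth (gaussScore₂ a b c m₁ m₂) := by
  unfold gaussScore₂; simp only [div_eq_mul_inv]; fun_prop

theorem pd1_gaussDensity :
    pd1 (gaussDensity a b c m₁ m₂) =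
      fun p => gaussScore₁ a b c m₁ m₂ p * gaussDensity a b c m₁ m₂ p := by
  ext p
  unfold pd1 gaussDensity gaussScore₁
  simp (disch := fun_prop) [div_eq_mul_inv, fderiv_exp, fderiv_fun_mul, fderiv_fun_sub,
    fderiv_fun_add, fderiv_fun_pow, fderiv_fst, fderiv_snd]
  ring

theorem pd2_gaussDensity :
    pd2 (gaussDensity a b c m₁ m₂) =
      fun p => gaussScore₂ a b c m₁ m₂ p * gaussDensity a b c m₁ m₂ p := by
  ext p
  unfold pd2 gaussDensity gaussScore₂
  simp (disch := fun_prop) [div_eq_mul_inv, fderiv_exp, fderiv_fun_mul, fderiv_fun_sub,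
    fderiv_fun_add, fderiv_fun_pow, fderiv_fst, fderiv_snd]
  ring

theorem pd1_gaussScore₂ : pd1 (gaussScore₂ a b c m₁ m₂) = fun _ => c / (a * b - c ^ 2) := by
  ext p
  unfold pd1 gaussScore₂
  simp (disch := fun_prop) [div_eq_mul_inv, fderiv_fun_mul, fderiv_fun_sub, fderiv_fst,
    fderiv_snd, mul_comm]

theorem pd2_gaussScore₁ : pd2 (gaussScore₁ a b c m₁ m₂) = fun _ => c / (a * b - c ^ 2) := by
  ext p
  unfold pd2 gaussScore₁
  simp (disch := fun_prop) [div_eq_mul_inv, fderiv_fun_mul, fderiv_fun_sub, fderiv_fst,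
    fderiv_snd, mul_comm]

theorem gaussCov_mul_gaussScore_fst (hd : a * b - c ^ 2 ≠ 0) (p : ℝ × ℝ) :
    a * gaussScore₁ a b c m₁ m₂ p + c * gaussScore₂ a b c m₁ m₂ p = -(p.1 - m₁) := by
  unfold gaussScore₁ gaussScore₂
  rw [mul_div_assoc', mul_div_assoc', ← add_div, div_eq_iff hd]; ring

theorem gaussCov_mul_gaussScore_snd (hd : a * b - c ^ 2 ≠ 0) (p : ℝ × ℝ) :
    c * gaussScore₁ a b c m₁ m₂ p + b * gaussScore₂ a b c m₁ m₂ p = -(p.2 - m₂) := by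
  unfold gaussScore₁ gaussScore₂
  rw [mul_div_assoc', mul_div_assoc', ← add_div, div_eq_iff hd]; ring

theorem integral_pd1_add_mul_gaussScore₁_eq_zero (ha : 0 < a) (hb : 0 < b)
    (hd : 0 < a * b - c ^ 2) {F : ℝ × ℝ → ℝ} (hF : Differentiable ℝ F) (hF₀ : PolyGrowth F)
    (hF₁ : PolyGrowth (pd1 F)) :
    ∫ p, (pd1 F p + F p * gaussScore₁ a b c m₁ m₂ p) * gaussDensity a b c m₁ m₂ p = 0 := by
  have hFm : Measurable F := hF.continuous.measurable
  have h₀ := hF₀.integrable_mul_gaussDensity ha hb hd (m₁ := m₁) (m₂ := m₂) hFm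
  have h₁ := hF₁.integrable_mul_gaussDensity ha hb hd (m₁ := m₁) (m₂ := m₂) (measurable_pd1 F)
  have h₂ : Integrable fun p => F p * pd1 (gaussDensity a b c m₁ m₂) p := by
    rw [pd1_gaussDensity]
    simpa only [mul_assoc] using PolyGrowth.integrable_mul_gaussDensity
      (f := fun p => F p * gaussScore₁ a b c m₁ m₂ p) ha hb hd (by fun_prop) (by fun_prop)
  have ibp : ∫ p, F p * pd1 (gaussDensity a b c m₁ m₂) p =
      -∫ p, pd1 F p * gaussDensity a b c m₁ m₂ p :=
    integral_mul_fderiv_eq_neg_fderiv_mul_of_integrable h₁ h₂ h₀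
      (fun p _ => hF p) (fun p _ => differentiable_gaussDensity p)
  rw [pd1_gaussDensity] at ibp h₂
  simp only [add_mul, mul_assoc]
  rw [integral_add h₁ h₂, ibp, add_neg_cancel]

theorem integral_pd2_add_mul_gaussScore₂_eq_zero (ha : 0 < a) (hb : 0 < b)
    (hd : 0 < a * b - c ^ 2) {F : ℝ × ℝ → ℝ} (hF : Differentiable ℝ F) (hF₀ : PolyGrowth F)
    (hF₂ : PolyGrowth (pd2 F)) :
    ∫ p, (pd2 F p + F p * gaussScore₂ a b c m₁ m₂ p) * gaussDensity a b c m₁ m₂ p = 0 := by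
  have hFm : Measurable F := hF.continuous.measurable
  have h₀ := hF₀.integrable_mul_gaussDensity ha hb hd (m₁ := m₁) (m₂ := m₂) hFm
  have h₁ := hF₂.integrable_mul_gaussDensity ha hb hd (m₁ := m₁) (m₂ := m₂) (measurable_pd2 F)
  have h₂ : Integrable fun p => F p * pd2 (gaussDensity a b c m₁ m₂) p := by
    rw [pd2_gaussDensity]
    simpa only [mul_assoc] using PolyGrowth.integrable_mul_gaussDensity
      (f := fun p => F p * gaussScore₂ a b c m₁ m₂ p) ha hb hd (by fun_prop) (by fun_prop)
  have ibp : ∫ p, F p * pd2 (gaussDensity a b c m₁ m₂) p =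
      -∫ p, pd2 F p * gaussDensity a b c m₁ m₂ p :=
    integral_mul_fderiv_eq_neg_fderiv_mul_of_integrable h₁ h₂ h₀
      (fun p _ => hF p) (fun p _ => differentiable_gaussDensity p)
  rw [pd2_gaussDensity] at ibp h₂
  simp only [add_mul, mul_assoc]
  rw [integral_add h₁ h₂, ibp, add_neg_cancel]

theorem integral_divergence_mul_gaussDensity_eq_zero (ha : 0 < a) (hb : 0 < b)
    (hd : 0 < a * b - c ^ 2) {F₁ F₂ : ℝ × ℝ → ℝ} (hF₁ : Differentiable ℝ F₁)
    (hF₂ : Differentiable ℝ F₂) (hF₁₀ : PolyGrowth F₁) (hF₂₀ : PolyGrowth F₂)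
    (hF₁₁ : PolyGrowth (pd1 F₁)) (hF₂₂ : PolyGrowth (pd2 F₂)) :
    ∫ p, ((pd1 F₁ p + F₁ p * gaussScore₁ a b c m₁ m₂ p) +
      (pd2 F₂ p + F₂ p * gaussScore₂ a b c m₁ m₂ p)) * gaussDensity a b c m₁ m₂ p = 0 := by
  have hF₁m : Measurable F₁ := hF₁.continuous.measurable
  have hF₂m : Measurable F₂ := hF₂.continuous.measurable
  have i₁ : Integrable fun p => (pd1 F₁ p + F₁ p * gaussScore₁ a b c m₁ m₂ p) *
      gaussDensity a b c m₁ m₂ p :=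
    PolyGrowth.integrable_mul_gaussDensity ha hb hd (by fun_prop) (by fun_prop)
  have i₂ : Integrable fun p => (pd2 F₂ p + F₂ p * gaussScore₂ a b c m₁ m₂ p) *
      gaussDensity a b c m₁ m₂ p :=
    PolyGrowth.integrable_mul_gaussDensity ha hb hd (by fun_prop) (by fun_prop)
  simp only [add_mul (pd1 F₁ _ + _)]
  rw [integral_add i₁ i₂, integral_pd1_add_mul_gaussScore₁_eq_zero ha hb hd hF₁ hF₁₀ hF₁₁,
    integral_pd2_add_mul_gaussScore₂_eq_zero ha hb hd hF₂ hF₂₀ hF₂₂, add_zero]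

end GaussianDensity

theorem NicelyC2.mul {f g : ℝ × ℝ → ℝ} (hf : NicelyC2 f) (hg : NicelyC2 g) :
    NicelyC2 fun p => f p * g p := by
  obtain ⟨hf, _, _, _, _, _, _, _⟩ := hf
  obtain ⟨hg, _, _, _, _, _, _, _⟩ := hg
  have := hf.differentiable two_ne_zero
  have := hf.differentiable_pd1
  have := hf.differentiable_pd2
  have := hg.differentiable two_ne_zero
  have := hg.differentiable_pd1
  have := hg.differentiable_pd2
  refine ⟨hf.mul hg, by fun_prop, ?_, ?_, ?_, ?_, ?_, ?_⟩ <;>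
    simp (disch := fun_prop) only [pd1_mul, pd2_mul, pd1_add, pd2_add] <;> fun_prop

def carreDuChamp (η₁ η₂ ρ : ℝ) (f g : ℝ × ℝ → ℝ) (p : ℝ × ℝ) : ℝ :=
  η₁ ^ 2 * pd1 f p * pd1 g p + ρ * η₁ * η₂ * (pd1 f p * pd2 g p + pd2 f p * pd1 g p) +
    η₂ ^ 2 * pd2 f p * pd2 g p

theorem gen_mul (l₁ l₂ η₁ η₂ ρ m₁ m₂ : ℝ) {f g : ℝ × ℝ → ℝ} (hf : ContDiff ℝ 2 f)
    (hg : ContDiff ℝ 2 g) (p : ℝ × ℝ) :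
    gen l₁ l₂ η₁ η₂ ρ m₁ m₂ (fun p => f p * g p) p =
      f p * gen l₁ l₂ η₁ η₂ ρ m₁ m₂ g p + g p * gen l₁ l₂ η₁ η₂ ρ m₁ m₂ f p +
        carreDuChamp η₁ η₂ ρ f g p := by
  have := hf.differentiable two_ne_zero
  have := hf.differentiable_pd1
  have := hf.differentiable_pd2
  have := hg.differentiable two_ne_zero
  have := hg.differentiable_pd1
  have := hg.differentiable_pd2
  simp (disch := fun_prop) only [gen, carreDuChamp, pd1_mul, pd2_mul, pd1_add, pd2_add]
  ring

/- `h₁, h₂, h₁₂` are the Lyapunov equation `BA + AB = Σ` for `B = diag(l₁, l₂)` and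
`A = [[a, c], [c, b]]`: `A` is the stationary covariance. -/
theorem integral_gen_mul_gaussDensity_eq_zero {l₁ l₂ η₁ η₂ ρ a b c m₁ m₂ : ℝ} (ha : 0 < a)
    (hb : 0 < b) (hd : 0 < a * b - c ^ 2) (h₁ : η₁ ^ 2 = 2 * l₁ * a)
    (h₂ : η₂ ^ 2 = 2 * l₂ * b) (h₁₂ : ρ * η₁ * η₂ = (l₁ + l₂) * c) {f : ℝ × ℝ → ℝ}
    (hf : NicelyC2 f) :
    ∫ p, gen l₁ l₂ η₁ η₂ ρ m₁ m₂ f p * gaussDensity a b c m₁ m₂ p = 0 := by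
  obtain ⟨hf, _, _, _, _, _, _, _⟩ := hf
  have := hf.differentiable two_ne_zero
  have := hf.differentiable_pd1
  have := hf.differentiable_pd2
  set s₁ := gaussScore₁ a b c m₁ m₂
  set s₂ := gaussScore₂ a b c m₁ m₂
  -- `(Lf) Π = div (F Π)` for the flux `F = ½ Σ ∇f + κ f J (s₁, s₂)`, `J` a right-angle rotation.
  set κ := (l₁ - l₂) * c / 2
  set F₁ := fun p => η₁ ^ 2 / 2 * pd1 f p + ρ * η₁ * η₂ / 2 * pd2 f p + κ * (f p * s₂ p)
    with hF₁
  set F₂ := fun p => ρ * η₁ * η₂ / 2 * pd1 f p + η₂ ^ 2 / 2 * pd2 f p - κ * (f p * s₁ p)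
    with hF₂
  have hpd1 : pd1 F₁ = fun p => η₁ ^ 2 / 2 * pd1 (pd1 f) p +
      ρ * η₁ * η₂ / 2 * pd2 (pd1 f) p + κ * (pd1 f p * s₂ p + f p * (c / (a * b - c ^ 2))) := by
    simp (disch := fun_prop) only [hF₁, pd1_add, pd1_const_mul, pd1_mul, pd1_gaussScore₂, s₂,
      pd1_pd2_comm hf]
  have hpd2 : pd2 F₂ = fun p => ρ * η₁ * η₂ / 2 * pd2 (pd1 f) p +
      η₂ ^ 2 / 2 * pd2 (pd2 f) p - κ * (pd2 f p * s₁ p + f p * (c / (a * b - c ^ 2))) := by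
    simp (disch := fun_prop) only [hF₂, pd2_add, pd2_sub, pd2_const_mul, pd2_mul,
      pd2_gaussScore₁, s₁]
  have hdiv : ∀ p, gen l₁ l₂ η₁ η₂ ρ m₁ m₂ f p =
      (pd1 F₁ p + F₁ p * s₁ p) + (pd2 F₂ p + F₂ p * s₂ p) := by
    intro p
    have hs₁ := gaussCov_mul_gaussScore_fst hd.ne' (m₁ := m₁) (m₂ := m₂) p
    have hs₂ := gaussCov_mul_gaussScore_snd hd.ne' (m₁ := m₁) (m₂ := m₂) p
    rw [hpd1, hpd2, gen]
    linear_combination (-(s₁ p / 2) * pd1 f p) * h₁ + (-(s₂ p / 2) * pd2 f p) * h₂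
      + (-(s₂ p / 2) * pd1 f p - (s₁ p / 2) * pd2 f p) * h₁₂
      + (-l₁ * pd1 f p) * hs₁ + (-l₂ * pd2 f p) * hs₂
  simp only [hdiv]
  exact integral_divergence_mul_gaussDensity_eq_zero ha hb hd (by fun_prop) (by fun_prop)
    (by fun_prop) (by fun_prop) (by rw [hpd1]; fun_prop) (by rw [hpd2]; fun_prop)

theorem integral_mul_gen_mul_gaussDensity {l₁ l₂ η₁ η₂ ρ a b c m₁ m₂ : ℝ} (ha : 0 < a)
    (hb : 0 < b) (hd : 0 < a * b - c ^ 2) (h₁ : η₁ ^ 2 = 2 * l₁ * a)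
    (h₂ : η₂ ^ 2 = 2 * l₂ * b) (h₁₂ : ρ * η₁ * η₂ = (l₁ + l₂) * c) {e : ℝ × ℝ → ℝ}
    (he : NicelyC2 e) :
    ∫ p, e p * gen l₁ l₂ η₁ η₂ ρ m₁ m₂ e p * gaussDensity a b c m₁ m₂ p =
      -(1 / 2) * ∫ p, carreDuChamp η₁ η₂ ρ e e p * gaussDensity a b c m₁ m₂ p := by
  have hinv := integral_gen_mul_gaussDensity_eq_zero ha hb hd h₁ h₂ h₁₂ (m₁ := m₁) (m₂ := m₂)
    (he.mul he)
  obtain ⟨he, _, _, _, _, _, _, _⟩ := he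
  have hem : Measurable e := he.continuous.measurable
  set X := fun p => e p * gen l₁ l₂ η₁ η₂ ρ m₁ m₂ e p * gaussDensity a b c m₁ m₂ p
  have iX : Integrable X := PolyGrowth.integrable_mul_gaussDensity ha hb hd
    (by unfold gen; fun_prop) (by unfold gen; fun_prop)
  have iΓ : Integrable fun p => carreDuChamp η₁ η₂ ρ e e p * gaussDensity a b c m₁ m₂ p :=
    PolyGrowth.integrable_mul_gaussDensity ha hb hd (by unfold carreDuChamp; fun_prop)
      (by unfold carreDuChamp; fun_prop)
  have iXX : Integrable fun p => X p + X p := iX.add iX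
  simp only [gen_mul l₁ l₂ η₁ η₂ ρ m₁ m₂ he he, add_mul] at hinv
  rw [integral_add iXX iΓ, integral_add iX iX] at hinv
  linarith

theorem stationaryCov_det_pos {l₁ l₂ η₁ η₂ ρ : ℝ} (hl₁ : 0 < l₁) (hl₂ : 0 < l₂)
    (hη₁ : η₁ ≠ 0) (hη₂ : η₂ ≠ 0) (hρ : ρ ^ 2 < 1) :
    0 < η₁ ^ 2 / (2 * l₁) * (η₂ ^ 2 / (2 * l₂)) - (ρ * η₁ * η₂ / (l₁ + l₂)) ^ 2 := by
  have hl : ρ ^ 2 / (l₁ + l₂) ^ 2 < 1 / (4 * l₁ * l₂) := by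
    rw [div_lt_div_iff₀ (by positivity) (by positivity)]
    nlinarith [sq_nonneg (l₁ - l₂), mul_pos hl₁ hl₂]
  rw [sub_pos]
  calc (ρ * η₁ * η₂ / (l₁ + l₂)) ^ 2 = η₁ ^ 2 * η₂ ^ 2 * (ρ ^ 2 / (l₁ + l₂) ^ 2) := by
        rw [div_pow]; ring
    _ < η₁ ^ 2 * η₂ ^ 2 * (1 / (4 * l₁ * l₂)) := by gcongr
    _ = η₁ ^ 2 / (2 * l₁) * (η₂ ^ 2 / (2 * l₂)) := by field_simp; ring

theorem min_mul_one_sub_mul_le_carreDuChamp {η₁ η₂ ρ : ℝ} (hρ₀ : 0 ≤ ρ) (hρ₁ : ρ ≤ 1)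
    (f : ℝ × ℝ → ℝ) (p : ℝ × ℝ) :
    min (η₁ ^ 2) (η₂ ^ 2) * (1 - ρ) * (pd1 f p ^ 2 + pd2 f p ^ 2) ≤
      carreDuChamp η₁ η₂ ρ f f p := by
  have h₁ := min_le_left (η₁ ^ 2) (η₂ ^ 2)
  have h₂ := min_le_right (η₁ ^ 2) (η₂ ^ 2)
  have hρ : 0 ≤ 1 - ρ := by linarith
  unfold carreDuChamp
  nlinarith [mul_nonneg hρ₀ (sq_nonneg (η₁ * pd1 f p + η₂ * pd2 f p)),
    mul_le_mul_of_nonneg_right h₁ (mul_nonneg hρ (sq_nonneg (pd1 f p))),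
    mul_le_mul_of_nonneg_right h₂ (mul_nonneg hρ (sq_nonneg (pd2 f p)))]

/-- Energy/coercivity estimate for the OU generator: for `0 ≤ ρ < 1`
and every `C²` function `e` with at most polynomially growing derivatives up to
order 2, `−∫ e (Le) Π dy ≥ (1/2) min(η₁², η₂²)(1−ρ) ∫ |∇e|² Π dy`. -/
theorem generator_energy_estimate
    (l₁ l₂ η₁ η₂ ρ m₁ m₂ : ℝ)
    (hl₁ : 0 < l₁) (hl₂ : 0 < l₂) (hη₁ : 0 < η₁) (hη₂ : 0 < η₂)
    (hρ0 : 0 ≤ ρ) (hρ1 : ρ < 1)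
    (e : ℝ × ℝ → ℝ) (he : NicelyC2 e) :
    (1/2) * min (η₁^2) (η₂^2) * (1 - ρ) *
        ∫ p : ℝ × ℝ, ((pd1 e p)^2 + (pd2 e p)^2) * gaussPi l₁ l₂ η₁ η₂ ρ m₁ m₂ p ≤
      -∫ p : ℝ × ℝ,
        e p * gen l₁ l₂ η₁ η₂ ρ m₁ m₂ e p * gaussPi l₁ l₂ η₁ η₂ ρ m₁ m₂ p := by
  have ha : 0 < η₁ ^ 2 / (2 * l₁) := by positivity
  have hb : 0 < η₂ ^ 2 / (2 * l₂) := by positivity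
  have hd := stationaryCov_det_pos hl₁ hl₂ hη₁.ne' hη₂.ne' (by nlinarith : ρ ^ 2 < 1)
  have h₁ : η₁ ^ 2 = 2 * l₁ * (η₁ ^ 2 / (2 * l₁)) := by field_simp
  have h₂ : η₂ ^ 2 = 2 * l₂ * (η₂ ^ 2 / (2 * l₂)) := by field_simp
  have h₁₂ : ρ * η₁ * η₂ = (l₁ + l₂) * (ρ * η₁ * η₂ / (l₁ + l₂)) := by field_simp
  rw [gaussPi_eq_gaussDensity, integral_mul_gen_mul_gaussDensity ha hb hd h₁ h₂ h₁₂ he, neg_mul,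
    neg_neg, ← integral_const_mul, ← integral_const_mul]
  obtain ⟨-, _, _, _, _, _, _, _⟩ := he
  refine integral_mono ((PolyGrowth.integrable_mul_gaussDensity ha hb hd (by fun_prop)
    (by fun_prop)).const_mul _) ((PolyGrowth.integrable_mul_gaussDensity ha hb hd
    (by unfold carreDuChamp; fun_prop) (by unfold carreDuChamp; fun_prop)).const_mul _)
    fun p => ?_
  have hΓ := min_mul_one_sub_mul_le_carreDuChamp hρ0 hρ1.le e p (η₁ := η₁) (η₂ := η₂)
  have hw := gaussDensity_nonneg hd p (m₁ := m₁) (m₂ := m₂)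
  nlinarith
end
end
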